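/- (Ornstein–Weiss.) Let 𝔽 = ⟨a,b⟩ be the free group of rank 2. Identify U₂ with the group ℤ/2ℤ and U₄ with ℤ/2ℤ × ℤ/2ℤ, and let u₂ and u₄ be the uniform probability measures on these sets. Define φ: U₂^𝔽 → U₄^𝔽 by φ(x)(g) = (x(g) + x(ga), x(g) + x(gb)) for x ∈ U₂^𝔽 and g ∈ 𝔽. Then φ is a factor map from the Bernoulli shift (𝔽, U₂^𝔽, u₂^𝔽) onto the Bernoulli shift (𝔽, U₄^𝔽, u₄^𝔽): φ is 𝔽-equivariant for the shift actions and the pushforward of u₂^𝔽 under φ equals u₄^𝔽. -/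

import Mathlib

open MeasureTheory ENNReal

/-- The Bernoulli shift action of a group `G` on `G → K`: `(g • x) f = x (g⁻¹ * f)`. -/
def bshift (G K : Type*) [Group G] (g : G) (x : G → K) : G → K :=
  fun f => x (g⁻¹ * f)

/-- `μ` is the product of the probability measures `κ i`: it is a probability measure
giving every measurable cylinder set the product of the measures of its sides.
(For probability measures this characterizes the product measure uniquely.) -/
def IsProductMeasure {ι : Type*} {K : ι → Type*} [∀ i, MeasurableSpace (K i)]
    (μ : Measure (∀ i, K i)) (κ : ∀ i, Measure (K i)) : Prop :=
  IsProbabilityMeasure μ ∧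
    ∀ (s : Finset ι) (A : ∀ i, Set (K i)), (∀ i ∈ s, MeasurableSet (A i)) →
      μ {x | ∀ i ∈ s, x i ∈ A i} = ∏ i ∈ s, κ i (A i)

/-- `φ` is a factor map, from the system given by the maps `T g` on `(X, μ)` to the system
given by the maps `S g` on `(Y, ν)`, relative to the invariant set `X'` of full measure. -/
def IsFactorMapOn {ι X Y : Type*} [MeasurableSpace X] [MeasurableSpace Y]
    (T : ι → X → X) (S : ι → Y → Y) (μ : Measure X) (ν : Measure Y)
    (φ : X → Y) (X' : Set X) : Prop :=
  Measurable φ ∧ (∀ g, Set.MapsTo (T g) X' X') ∧ μ X'ᶜ = 0 ∧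
    (∀ g, ∀ x ∈ X', φ (T g x) = S g (φ x)) ∧ Measure.map φ μ = ν

/-- `φ` is a factor map from the system `(T, μ)` to the system `(S, ν)`:  it is measurable,
pushes `μ` forward to `ν`, and is equivariant on some invariant set of full measure. -/
def IsFactorMap {ι X Y : Type*} [MeasurableSpace X] [MeasurableSpace Y]
    (T : ι → X → X) (S : ι → Y → Y) (μ : Measure X) (ν : Measure Y)
    (φ : X → Y) : Prop :=
  ∃ X' : Set X, IsFactorMapOn T S μ ν φ X'

/-- `φ` is a measure-conjugacy: a factor map which is injective on the invariant full-measure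
set, with a measurable inverse. -/
def IsMeasureConjugacy {ι X Y : Type*} [MeasurableSpace X] [MeasurableSpace Y]
    (T : ι → X → X) (S : ι → Y → Y) (μ : Measure X) (ν : Measure Y)
    (φ : X → Y) : Prop :=
  ∃ X' : Set X, IsFactorMapOn T S μ ν φ X' ∧ Set.InjOn φ X' ∧
    ∃ ψ : Y → X, Measurable ψ ∧ ∀ x ∈ X', ψ (φ x) = x

/-- The two systems are measurably conjugate: there are factor maps in both directions that
are inverse to each other almost everywhere. -/
def IsMeasConj {ι X Y : Type*} [MeasurableSpace X] [MeasurableSpace Y]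
    (T : ι → X → X) (S : ι → Y → Y) (μ : Measure X) (ν : Measure Y) : Prop :=
  ∃ (φ : X → Y) (ψ : Y → X), IsFactorMap T S μ ν φ ∧ IsFactorMap S T ν μ ψ ∧
    (∀ᵐ x ∂μ, ψ (φ x) = x) ∧ (∀ᵐ y ∂ν, φ (ψ y) = y)

/-- The entropy `H(κ) = -∑ₖ κ({k}) log κ({k}) ∈ [0,∞]` of a measure on a countable space. -/
noncomputable def measEntropy {K : Type*} [MeasurableSpace K] (κ : Measure K) : ℝ≥0∞ :=
  ∑' k : K, ENNReal.ofReal (Real.negMulLog (κ {k}).toReal)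

/-- The free group `𝔽 = ⟨a,b⟩` of rank 2. -/
abbrev F2 : Type := FreeGroup (Fin 2)

/-- The first free generator `a` of `𝔽`. -/
def fa : F2 := FreeGroup.of 0

/-- The second free generator `b` of `𝔽`. -/
def fb : F2 := FreeGroup.of 1

/-- The Ornstein–Weiss map `φ(x)(g) = (x(g) + x(ga), x(g) + x(gb))`. -/
def owMap (x : F2 → ZMod 2) : F2 → ZMod 2 × ZMod 2 :=
  fun g => (x g + x (g * fa), x g + x (g * fb))

/-- The uniform probability measure `u₂` on `ℤ/2ℤ`. -/
noncomputable def u2 : Measure (ZMod 2) := (PMF.uniformOfFintype (ZMod 2)).toMeasure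

/-- The uniform probability measure `u₄` on `ℤ/2ℤ × ℤ/2ℤ`. -/
noncomputable def u4 : Measure (ZMod 2 × ZMod 2) :=
  (PMF.uniformOfFintype (ZMod 2 × ZMod 2)).toMeasure

/-!
`owMap` is additive, and for every finite `s ⊆ 𝔽` the equations `owMap x g = c g` (`g ∈ s`) are
solvable for every right-hand side `c`. Indeed, take `g ∈ s` of maximal word length: at most one
of `g, ga, gb` is read by the equations at the other points of `s` (it is `ga` if `g` ends in
`a⁻¹`, `gb` if `g` ends in `b⁻¹`, and `g` otherwise), so a solution for `s \ {g}` can be corrected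
on the two remaining coordinates. As `u₂^𝔽` is translation invariant, every finite-dimensional
marginal of its pushforward is a translation-invariant probability measure on the finite group
`((ℤ/2ℤ)²)^s`, hence uniform, hence the marginal of `u₄^𝔽`.
-/

namespace FreeGroup

variable {α : Type*}

def tripod (a b : α) (g : FreeGroup α) : Set (FreeGroup α) := {g, g * of a, g * of b}

theorem mem_tripod_iff_eq_mul_inv {a b : α} {g u : FreeGroup α} :
    u ∈ tripod a b g ↔ g = u ∨ g = u * (of a)⁻¹ ∨ g = u * (of b)⁻¹ := by
  simp only [tripod, Set.mem_insert_iff, Set.mem_singleton_iff, eq_mul_inv_iff_mul_eq, eq_comm]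

variable [DecidableEq α]

theorem norm_mul_mk_of_isReduced {g : FreeGroup α} {w : List (α × Bool)}
    (h : IsReduced (g.toWord ++ w)) : norm (g * mk w) = norm g + w.length := by
  have hmk : g * mk w = mk (g.toWord ++ w) := by rw [← mul_mk, mk_toWord]
  simp [norm, hmk, toWord_mk, h.reduce_eq]

theorem norm_lt_norm_mul_mk {g : FreeGroup α} {w : List (α × Bool)} (hw : w ≠ [])
    (hred : IsReduced w) (hlast : ∀ ℓ ∈ g.toWord.getLast?, ∀ m ∈ w.head?, ℓ ≠ (m.1, !m.2)) :
    norm g < norm (g * mk w) := by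
  refine (norm_mul_mk_of_isReduced (List.isChain_append.2 ⟨isReduced_toWord, hred, ?_⟩)).symm
    ▸ Nat.lt_add_of_pos_right (List.length_pos_iff.2 hw)
  rintro ⟨i, β⟩ hℓ ⟨j, γ⟩ hm rfl
  have := hlast _ hℓ _ hm
  cases β <;> cases γ <;> simp_all

variable {a b x y : α} {g h : FreeGroup α}

theorem norm_lt_norm_mul_of (hg : ∀ ℓ ∈ g.toWord.getLast?, ℓ ≠ (x, false)) :
    norm g < norm (g * of x) :=
  norm_lt_norm_mul_mk (List.cons_ne_nil _ _) .singleton (by simpa using hg)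

theorem norm_lt_norm_mul_inv_of (hg : ∀ ℓ ∈ g.toWord.getLast?, ℓ ≠ (y, true)) :
    norm g < norm (g * (of y)⁻¹) := by
  rw [of, inv_mk]
  exact norm_lt_norm_mul_mk (List.cons_ne_nil _ _) .singleton (by simpa [invRev] using hg)

theorem norm_lt_norm_mul_of_mul_inv_of (hxy : x ≠ y)
    (hg : ∀ ℓ ∈ g.toWord.getLast?, ℓ ≠ (x, false)) :
    norm g < norm (g * of x * (of y)⁻¹) := by
  rw [of, of, inv_mk, mul_assoc, mul_mk]
  refine norm_lt_norm_mul_mk (List.cons_ne_nil _ _) ?_ (by simpa [invRev] using hg)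
  simp [invRev, IsReduced, hxy]

theorem eq_or_norm_lt_of_mul_of_mem_tripod (hg : ∀ ℓ ∈ g.toWord.getLast?, ℓ ≠ (x, false))
    (hu : g * of x ∈ tripod a b h) : h = g ∨ norm g < norm h := by
  have key : ∀ y, h = g * of x * (of y)⁻¹ → h = g ∨ norm g < norm h := by
    rintro y rfl
    by_cases hxy : x = y
    · simp [hxy]
    · exact .inr (norm_lt_norm_mul_of_mul_inv_of hxy hg)
  rcases mem_tripod_iff_eq_mul_inv.1 hu with rfl | h_eq | h_eq
  · exact .inr (norm_lt_norm_mul_of hg)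
  · exact key a h_eq
  · exact key b h_eq

theorem eq_or_norm_lt_of_mem_tripod
    (hg : ∀ ℓ ∈ g.toWord.getLast?, ℓ ≠ (a, true) ∧ ℓ ≠ (b, true)) (hu : g ∈ tripod a b h) :
    h = g ∨ norm g < norm h := by
  rcases mem_tripod_iff_eq_mul_inv.1 hu with rfl | rfl | rfl
  · exact .inl rfl
  · exact .inr (norm_lt_norm_mul_inv_of fun ℓ hℓ => (hg ℓ hℓ).1)
  · exact .inr (norm_lt_norm_mul_inv_of fun ℓ hℓ => (hg ℓ hℓ).2)

theorem exists_tripod_inter_subset_singleton (hab : a ≠ b) {s : Finset (FreeGroup α)}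
    (hs : s.Nonempty) :
    ∃ g ∈ s, ∃ z, ∀ h ∈ s, h ≠ g → tripod a b h ∩ tripod a b g ⊆ {z} := by
  obtain ⟨g, hg, hmax⟩ := s.exists_max_image norm hs
  suffices ∃ z, ∀ u ∈ tripod a b g, u ≠ z → ∀ h, u ∈ tripod a b h → h = g ∨ norm g < norm h by
    obtain ⟨z, hz⟩ := this
    refine ⟨g, hg, z, fun h hh hne u ⟨huh, hug⟩ => by_contra fun huz => ?_⟩
    exact (hz u hug huz h huh).elim hne (hmax h hh).not_gt
  by_cases ha : (a, false) ∈ g.toWord.getLast?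
  · refine ⟨g * of a, fun u hu hne h' => ?_⟩
    rcases hu with rfl | rfl | rfl
    · exact eq_or_norm_lt_of_mem_tripod fun ℓ hℓ => by cases Option.mem_unique hℓ ha; simp
    · exact absurd rfl hne
    · exact eq_or_norm_lt_of_mul_of_mem_tripod fun ℓ hℓ => by
        cases Option.mem_unique hℓ ha; simp [hab]
  by_cases hb : (b, false) ∈ g.toWord.getLast?
  · refine ⟨g * of b, fun u hu hne h' => ?_⟩
    rcases hu with rfl | rfl | rfl
    · exact eq_or_norm_lt_of_mem_tripod fun ℓ hℓ => by cases Option.mem_unique hℓ hb; simp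
    · exact eq_or_norm_lt_of_mul_of_mem_tripod fun ℓ hℓ => by
        cases Option.mem_unique hℓ hb; simp [Ne.symm hab]
    · exact absurd rfl hne
  refine ⟨g, fun u hu hne h' => ?_⟩
  rcases hu with rfl | rfl | rfl
  · exact absurd rfl hne
  · exact eq_or_norm_lt_of_mul_of_mem_tripod fun ℓ hℓ h => ha (h ▸ hℓ)
  · exact eq_or_norm_lt_of_mul_of_mem_tripod fun ℓ hℓ h => hb (h ▸ hℓ)

end FreeGroup

theorem MeasureTheory.Measure.eq_of_forall_measure_singleton_eq {α : Type*} [Fintype α]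
    [MeasurableSpace α] [MeasurableSingletonClass α] {μ ν : Measure α} [IsProbabilityMeasure μ]
    [IsProbabilityMeasure ν] (hμ : ∀ a b, μ {a} = μ {b}) (hν : ∀ a b, ν {a} = ν {b}) :
    μ = ν := by
  have card_mul : ∀ (ρ : Measure α) [IsProbabilityMeasure ρ], (∀ a b, ρ {a} = ρ {b}) →
      ∀ a, Fintype.card α * ρ {a} = 1 := fun ρ _ hρ a => by
    rw [← measure_univ (μ := ρ), ← Finset.coe_univ, ← sum_measure_singleton,
      Finset.sum_congr rfl fun b _ => hρ b a, Finset.sum_const, nsmul_eq_mul, Finset.card_univ]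
  refine Measure.ext_of_singleton fun a => ?_
  have hne : (Fintype.card α : ℝ≥0∞) ≠ 0 := by simp [(⟨a⟩ : Nonempty α)]
  exact (ENNReal.mul_right_inj hne (ENNReal.natCast_ne_top _)).1
    ((card_mul μ hμ a).trans (card_mul ν hν a).symm)

theorem PMF.map_add_const_toMeasure_uniformOfFintype {G : Type*} [AddGroup G] [Fintype G]
    [MeasurableSpace G] [MeasurableSingletonClass G] (c : G) :
    (uniformOfFintype G).toMeasure.map (· + c) = (uniformOfFintype G).toMeasure := by
  refine Measure.ext_of_singleton fun a => ?_
  rw [Measure.map_apply (measurable_of_countable _) (measurableSet_singleton a),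
    Set.preimage_add_right_singleton, toMeasure_apply_singleton _ _ (measurableSet_singleton _),
    toMeasure_apply_singleton _ _ (measurableSet_singleton _), uniformOfFintype_apply,
    uniformOfFintype_apply]

section ProductMeasure

variable {ι : Type*} {K : ι → Type*} [∀ i, MeasurableSpace (K i)] {μ : Measure (∀ i, K i)}
  {κ : ∀ i, Measure (K i)} [∀ i, IsProbabilityMeasure (κ i)]

theorem IsProductMeasure.eq_infinitePi (h : IsProductMeasure μ κ) : μ = Measure.infinitePi κ :=
  Measure.eq_infinitePi κ fun s t ht => h.2 s t fun i _ => ht i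

theorem IsProductMeasure.map_add_const [∀ i, AddGroup (K i)] [∀ i, MeasurableAdd (K i)]
    (h : IsProductMeasure μ κ) (hκ : ∀ i c, (κ i).map (· + c) = κ i) (x₀ : ∀ i, K i) :
    μ.map (· + x₀) = μ := by
  rw [h.eq_infinitePi]
  exact (Measure.infinitePi_map_pi (f := fun i y => y + x₀ i) _ fun i => by fun_prop).trans
    (by simp only [hκ])

end ProductMeasure

instance : IsProbabilityMeasure u2 := by unfold u2; infer_instance

instance : IsProbabilityMeasure u4 := by unfold u4; infer_instance

open FreeGroup

theorem measurable_owMap : Measurable owMap := by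
  unfold owMap; fun_prop

theorem owMap_add (x y : F2 → ZMod 2) : owMap (x + y) = owMap x + owMap y := by
  funext g
  simp only [owMap, Pi.add_apply, Prod.mk_add_mk]
  ring_nf

theorem owMap_bshift (g : F2) (x : F2 → ZMod 2) :
    owMap (bshift F2 (ZMod 2) g x) = bshift F2 (ZMod 2 × ZMod 2) g (owMap x) := by
  funext f
  simp [owMap, bshift, mul_assoc]

theorem owMap_apply_congr {x y : F2 → ZMod 2} {g : F2} (h : ∀ u ∈ tripod 0 1 g, x u = y u) :
    owMap x g = owMap y g := by
  simp only [owMap, fa, fb, h g (by simp [tripod]), h (g * of 0) (by simp [tripod]),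
    h (g * of 1) (by simp [tripod])]

theorem exists_owMap_apply_eq (x : F2 → ZMod 2) (g z : F2) (e : ZMod 2 × ZMod 2) :
    ∃ x', owMap x' g = e ∧ ∀ u ∉ tripod 0 1 g \ {z}, x' u = x u := by
  have hga : g * fa ≠ g := mul_ne_left.2 (of_ne_one 0)
  have hgb : g * fb ≠ g := mul_ne_left.2 (of_ne_one 1)
  have hab : g * fa ≠ g * fb := (mul_right_injective g).ne (of_injective.ne (by decide))
  have cancel : ∀ v w : ZMod 2, v + w + w = v := by decide
  -- the value at `g` that leaves `x z` unchanged
  let t := if z = g * fa then x z + e.1 else if z = g * fb then x z + e.2 else x g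
  refine ⟨fun u => if u = g then t else if u = g * fa then t + e.1
    else if u = g * fb then t + e.2 else x u, ?_, fun u hu => ?_⟩
  · simp [owMap, hga, hgb, hab.symm, ← add_assoc, CharTwo.add_self_eq_zero]
  · have hz : u = g ∨ u = g * fa ∨ u = g * fb → u = z := by simpa [tripod, fa, fb] using hu
    dsimp only
    split_ifs with h1 h2 h3
    · obtain rfl := hz (.inl h1)
      simp [t, h1, hga.symm, hgb.symm]
    · obtain rfl := hz (.inr (.inl h2))
      simp [t, h2, cancel]
    · obtain rfl := hz (.inr (.inr h3))
      simp [t, h3, hab.symm, cancel]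
    · rfl

theorem exists_eqOn_owMap (s : Finset F2) (c : F2 → ZMod 2 × ZMod 2) :
    ∃ x, Set.EqOn (owMap x) c s := by
  induction s using Finset.strongInduction with
  | H s ih =>
  obtain rfl | hs := s.eq_empty_or_nonempty
  · exact ⟨0, by simp⟩
  obtain ⟨g, hg, z, hz⟩ :=
    exists_tripod_inter_subset_singleton (a := (0 : Fin 2)) (b := 1) (by decide) hs
  obtain ⟨x', hx'⟩ := ih (s.erase g) (s.erase_ssubset hg)
  obtain ⟨x, hxg, hxx'⟩ := exists_owMap_apply_eq x' g z (c g)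
  refine ⟨x, fun h hh => ?_⟩
  obtain rfl | hne := eq_or_ne h g
  · exact hxg
  rw [← hx' (Finset.mem_erase.2 ⟨hne, hh⟩)]
  exact owMap_apply_congr fun u hu => hxx' u fun ⟨hug, huz⟩ => huz (hz h hh hne ⟨hu, hug⟩)

theorem isProjectiveLimit_map_owMap {μ₂ : Measure (F2 → ZMod 2)}
    (hμ₂ : IsProductMeasure μ₂ fun _ => u2) :
    IsProjectiveLimit (μ₂.map owMap) fun s => Measure.pi fun _ : s => u4 := by
  intro s
  have := hμ₂.1
  have hf : Measurable (s.restrict ∘ owMap) := (Finset.measurable_restrict s).comp measurable_owMap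
  have := Measure.isProbabilityMeasure_map (μ := μ₂) hf.aemeasurable
  rw [Measure.map_map (Finset.measurable_restrict s) measurable_owMap]
  refine Measure.eq_of_forall_measure_singleton_eq (fun c c' => ?_)
    (fun c c' => by simp [Measure.pi_singleton, u4])
  obtain ⟨x₀, hx₀⟩ := exists_eqOn_owMap s fun i => if h : i ∈ s then c' ⟨i, h⟩ - c ⟨i, h⟩ else 0
  have hfiber : (s.restrict ∘ owMap) ⁻¹' {c} = (· + x₀) ⁻¹' ((s.restrict ∘ owMap) ⁻¹' {c'}) := by
    ext x
    simp only [Set.mem_preimage, Function.comp_apply, Set.mem_singleton_iff, funext_iff,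
      Finset.restrict, owMap_add, Pi.add_apply]
    refine forall_congr' fun i => ?_
    simp only [hx₀ i.2, dif_pos i.2, Subtype.coe_eta]
    rw [add_sub_left_comm, add_eq_left, sub_eq_zero]
  rw [Measure.map_apply hf (measurableSet_singleton c), hfiber,
    ← Measure.map_apply (by fun_prop) (hf (measurableSet_singleton c')),
    hμ₂.map_add_const fun _ => PMF.map_add_const_toMeasure_uniformOfFintype,
    Measure.map_apply hf (measurableSet_singleton c')]

/-- **Ornstein–Weiss.** The map `φ(x)(g) = (x(g) + x(ga), x(g) + x(gb))` is a factor map from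
the Bernoulli shift `(𝔽, U₂^𝔽, u₂^𝔽)` onto the Bernoulli shift `(𝔽, U₄^𝔽, u₄^𝔽)`:  it is
measurable, `𝔽`-equivariant for the shift actions, and pushes `u₂^𝔽` forward to `u₄^𝔽`. -/
theorem ornstein_weiss_factor_map
    (μ₂ : Measure (F2 → ZMod 2)) (μ₄ : Measure (F2 → ZMod 2 × ZMod 2))
    (hμ₂ : IsProductMeasure μ₂ (fun _ => u2)) (hμ₄ : IsProductMeasure μ₄ (fun _ => u4)) :
    Measurable owMap ∧
    (∀ (g : F2) (x : F2 → ZMod 2),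
      owMap (bshift F2 (ZMod 2) g x) = bshift F2 (ZMod 2 × ZMod 2) g (owMap x)) ∧
    Measure.map owMap μ₂ = μ₄ := by
  refine ⟨measurable_owMap, owMap_bshift, ?_⟩
  rw [hμ₄.eq_infinitePi]
  exact (isProjectiveLimit_map_owMap hμ₂).unique (Measure.isProjectiveLimit_infinitePi _)
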